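/- arXiv:2509.00671 — 3 statements merged into one kernel-verified Lean document; each statement's English description precedes it below -/
import Mathlib

section
/- Let R be a unital ring, G a finite group, and θ : G → Aut(R) a group homomorphism into the ring automorphisms of R. Let V be a left ℤ[G]-module that is free as a ℤ-module, and let M be a left R_θ[G]-module that is projective as a left R_θ[G]-module. Then V ⊗_ℤ M, equipped with the semi-diagonal action, is a projective left R_θ[G]-module. -/
/-!
STATEMENT 2: Let `R` be a unital ring, `G` a finite group, and `θ : G → Aut(R)` a group
homomorphism into the ring automorphisms of `R`.  Let `V` be a left `ℤ[G]`-module that is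
free as a `ℤ`-module, and let `M` be a left `R_θ[G]`-module that is projective as a left
`R_θ[G]`-module.  Then `V ⊗_ℤ M`, equipped with the semi-diagonal action
`(r·g)·(v ⊗ m) = (g·v) ⊗ ((r·g)·m)`, is a projective left `R_θ[G]`-module.

The skew group ring `R_θ[G]` is formalized as any ring `A` together with an additive
isomorphism `Φ : (⊕_{g ∈ G} R·g) ≃+ A` (the domain realized as `G → R` since `G` is
finite) transporting the skew convolution product `(r·g)(s·h) = (r·θ(g)(s))·(gh)` to the
multiplication of `A` and the element `1_R·1_G` to `1`.  The element `r·g ∈ R_θ[G]` is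
then `Φ (Pi.single g r)`; the semi-diagonal module structure on `V ⊗_ℤ M` is formalized
as any `A`-module structure satisfying the semi-diagonal formula on generators `r·g` of
`A` and pure tensors.
-/

/-- The skew convolution product on `G → R` induced by `θ`. -/
def skewConv {R : Type*} [Ring R] {G : Type*} [Group G] [Fintype G]
    (θ : G →* RingAut R) (f f' : G → R) : G → R :=
  fun k => ∑ g : G, f g * θ g (f' (g⁻¹ * k))

/-- The element `1_R·1_G` of the skew group ring, in coordinates. -/
def skewOne (R : Type*) [Ring R] (G : Type*) [Group G] [DecidableEq G] : G → R :=
  fun k => if k = 1 then 1 else 0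

open TensorProduct

set_option maxHeartbeats 1600000

theorem semidiagonal_projective_of_free_of_projective
    (R : Type) [Ring R] (G : Type) [Group G] [Fintype G] [DecidableEq G]
    (θ : G →* RingAut R)
    -- `A` is the skew group ring `R_θ[G]`:
    (A : Type) [Ring A] (Φ : (G → R) ≃+ A)
    (hΦmul : ∀ f f' : G → R, Φ f * Φ f' = Φ (skewConv θ f f'))
    (hΦone : Φ (skewOne R G) = 1)
    -- `M` is a left `R_θ[G]`-module:
    (M : Type) [AddCommGroup M] [Module A M]
    -- `V` is a left `ℤ[G]`-module:
    (V : Type) [AddCommGroup V] [Module (MonoidAlgebra ℤ G) V]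
    -- `V ⊗_ℤ M` carries the semi-diagonal `R_θ[G]`-action:
    [Module A (TensorProduct ℤ V M)]
    (hsemi : ∀ (r : R) (g : G) (v : V) (m : M),
      (Φ (Pi.single g r)) • (v ⊗ₜ[ℤ] m) =
        ((MonoidAlgebra.single g (1 : ℤ)) • v) ⊗ₜ[ℤ] ((Φ (Pi.single g r)) • m))
    -- `V` is free as a `ℤ`-module:
    (hV : Module.Free ℤ V)
    -- `M` is projective as a left `R_θ[G]`-module:
    (hM : Module.Projective A M) :
    Module.Projective A (TensorProduct ℤ V M) := by
  classical
  obtain ⟨s, hs⟩ := (Module.projective_def').mp hM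
  have hsm : ∀ m : M, ((s m).sum fun m' c => c • m') = m := by
    intro m
    have := congrArg (fun F => F m) hs
    simpa [Finsupp.linearCombination_apply, Finsupp.sum] using this
  -- singles multiply as expected
  have hsingle : ∀ (h g : G) (r u : R),
      Φ (Pi.single h r) * Φ (Pi.single g u) = Φ (Pi.single (h * g) (r * θ h u)) := by
    intro h g r u
    rw [hΦmul]; congr 1; funext k
    simp only [skewConv]
    rw [Finset.sum_eq_single h]
    · by_cases hk : k = h * g
      · simp [hk, Pi.single_apply]
      · have hk' : ¬ (h⁻¹ * k = g) := by
          intro hc; exact hk (by rw [← hc, mul_inv_cancel_left])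
        simp [Pi.single_apply, hk, hk']
    · intro b _ hb; simp [Pi.single_apply, hb]
    · simp
  -- every element of A is a sum of singles
  have hgen : ∀ a : A, ∑ g : G, Φ (Pi.single g (Φ.symm a g)) = a := by
    intro a
    rw [← map_sum, Finset.univ_sum_single, Φ.apply_symm_apply]
  -- group element action and its inverse on V
  have hvv : ∀ (g : G) (v : V),
      (MonoidAlgebra.single g (1 : ℤ)) • (MonoidAlgebra.single g⁻¹ (1 : ℤ)) • v = v := by
    intro g v
    rw [← mul_smul, MonoidAlgebra.single_mul_single, mul_inv_cancel, mul_one,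
      ← MonoidAlgebra.one_def, one_smul]
  have hvv2 : ∀ (h g : G) (v : V),
      (MonoidAlgebra.single (h * g)⁻¹ (1 : ℤ)) • (MonoidAlgebra.single h (1 : ℤ)) • v
        = (MonoidAlgebra.single g⁻¹ (1 : ℤ)) • v := by
    intro h g v
    rw [← mul_smul, MonoidAlgebra.single_mul_single, mul_inv_rev, mul_one,
      inv_mul_cancel_right]
  -- the untwisting map
  set T : V → A → A ⊗[ℤ] V := fun v a =>
    ∑ g : G, (Φ (Pi.single g (Φ.symm a g))) ⊗ₜ[ℤ]
      ((MonoidAlgebra.single g⁻¹ (1 : ℤ)) • v) with hT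
  have hT0 : ∀ v, T v 0 = 0 := by
    intro v; simp [hT]
  have hTadda : ∀ v a a', T v (a + a') = T v a + T v a' := by
    intro v a a'
    simp only [hT, ← Finset.sum_add_distrib]
    refine Finset.sum_congr rfl fun g _ => ?_
    have hsa : Φ.symm (a + a') g = Φ.symm a g + Φ.symm a' g := by
      rw [map_add]; rfl
    rw [hsa, Pi.single_add, map_add, TensorProduct.add_tmul]
  have hTaddv : ∀ v v' a, T (v + v') a = T v a + T v' a := by
    intro v v' a
    simp only [hT, ← Finset.sum_add_distrib]
    refine Finset.sum_congr rfl fun g _ => ?_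
    rw [smul_add, TensorProduct.tmul_add]
  -- equivariance of the untwisting map
  have hTequiv : ∀ (h : G) (r : R) (v : V) (c : A),
      T ((MonoidAlgebra.single h (1 : ℤ)) • v) (Φ (Pi.single h r) * c)
        = Φ (Pi.single h r) • T v c := by
    intro h r v c
    have hconv : ∀ k, Φ.symm (Φ (Pi.single h r) * c) k
        = r * θ h (Φ.symm c (h⁻¹ * k)) := by
      intro k
      conv_lhs => rw [← Φ.apply_symm_apply c, hΦmul, Φ.symm_apply_apply]
      simp only [skewConv]
      rw [Finset.sum_eq_single h]
      · simp [Pi.single_apply]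
      · intro b _ hb; simp [Pi.single_apply, hb]
      · simp
    rw [hT]
    simp only
    rw [Finset.smul_sum]
    refine (Fintype.sum_equiv (Equiv.mulLeft h) _ _ fun g => ?_).symm
    simp only [Equiv.coe_mulLeft]
    rw [TensorProduct.smul_tmul', smul_eq_mul, hsingle, hconv, inv_mul_cancel_left, hvv2]
  -- the retraction component maps
  set innerlin : M → (A →ₗ[A] (V →ₗ[ℤ] (V ⊗[ℤ] M))) := fun m' =>
    { toFun := fun a =>
        { toFun := fun v => a • (v ⊗ₜ[ℤ] m')
          map_add' := by
            intro v v'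
            rw [TensorProduct.add_tmul, smul_add]
          map_smul' := by
            intro n v
            dsimp only [RingHom.id_apply]
            rw [← TensorProduct.smul_tmul']
            exact map_zsmul (DistribMulAction.toAddMonoidHom (V ⊗[ℤ] M) a) n _ }
      map_add' := by intro a a'; ext v; simp [add_smul]
      map_smul' := by intro a a'; ext v; simp [mul_smul] } with hinner
  set φ : M → ((A ⊗[ℤ] V) →ₗ[A] (V ⊗[ℤ] M)) := fun m' =>
    TensorProduct.AlgebraTensorModule.lift (innerlin m') with hφ
  have hφtmul : ∀ (m' : M) (a : A) (v : V), φ m' (a ⊗ₜ[ℤ] v) = a • (v ⊗ₜ[ℤ] m') := by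
    intro m' a v
    rw [hφ]
    dsimp only
    rw [TensorProduct.AlgebraTensorModule.lift_tmul, hinner]
    rfl
  have hφT : ∀ (m' : M) (v : V) (c : A), φ m' (T v c) = v ⊗ₜ[ℤ] (c • m') := by
    intro m' v c
    rw [hT]
    simp only [map_sum]
    calc (∑ g : G, φ m' (Φ (Pi.single g (Φ.symm c g)) ⊗ₜ[ℤ]
            ((MonoidAlgebra.single g⁻¹ (1 : ℤ)) • v)))
        = ∑ g : G, v ⊗ₜ[ℤ] (Φ (Pi.single g (Φ.symm c g)) • m') := by
          refine Finset.sum_congr rfl fun g _ => ?_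
          rw [hφtmul, hsemi, hvv]
      _ = v ⊗ₜ[ℤ] (c • m') := by
          conv_rhs => rw [← hgen c]
          rw [Finset.sum_smul, TensorProduct.tmul_sum]
  -- the retraction
  set fmap : (M →₀ (A ⊗[ℤ] V)) →ₗ[A] (V ⊗[ℤ] M) :=
    Finsupp.lsum ℕ (fun m' => φ m') with hfmap
  -- the section, first as a `ℤ`-bilinear map
  have hT0v : ∀ a : A, T 0 a = 0 := by
    intro a; simp [hT]
  set g0 : V →ₗ[ℤ] M →ₗ[ℤ] (M →₀ (A ⊗[ℤ] V)) :=
    AddMonoidHom.toIntLinearMap (AddMonoidHom.mk'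
      (fun v => AddMonoidHom.toIntLinearMap
        ((Finsupp.mapRange.addMonoidHom (AddMonoidHom.mk' (T v) (hTadda v))).comp
          s.toAddMonoidHom))
      (by
        intro v v'
        ext m m'
        show T (v + v') (s m m') = T v (s m m') + T v' (s m m')
        exact hTaddv v v' (s m m'))) with hg0
  set gZ : (V ⊗[ℤ] M) →ₗ[ℤ] (M →₀ (A ⊗[ℤ] V)) := TensorProduct.lift g0 with hgZ
  have hgZtmul : ∀ (v : V) (m : M),
      gZ (v ⊗ₜ[ℤ] m) = Finsupp.mapRange (T v) (hT0 v) (s m) := by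
    intro v m
    rw [hgZ]
    erw [TensorProduct.lift.tmul]
    rw [hg0]
    rfl
  -- A-linearity of gZ
  have hgZsingle : ∀ (h : G) (r : R) (x : V ⊗[ℤ] M),
      gZ (Φ (Pi.single h r) • x) = Φ (Pi.single h r) • gZ x := by
    intro h r x
    induction x using TensorProduct.induction_on with
    | zero => rw [smul_zero, map_zero, smul_zero]
    | tmul v m =>
      rw [hsemi, hgZtmul, hgZtmul, map_smul]
      refine Finsupp.ext fun m' => ?_
      rw [Finsupp.mapRange_apply, Finsupp.smul_apply, Finsupp.smul_apply,
        Finsupp.mapRange_apply, smul_eq_mul, hTequiv]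
    | add x y ihx ihy => rw [smul_add, map_add, map_add, ihx, ihy, smul_add]
  have hgZsmul : ∀ (a : A) (x : V ⊗[ℤ] M), gZ (a • x) = a • gZ x := by
    intro a x
    conv_lhs => rw [← hgen a]
    conv_rhs => rw [← hgen a]
    rw [Finset.sum_smul, map_sum, Finset.sum_smul]
    exact Finset.sum_congr rfl fun g _ => hgZsingle g (Φ.symm a g) x
  set gmap : (V ⊗[ℤ] M) →ₗ[A] (M →₀ (A ⊗[ℤ] V)) :=
    { toFun := gZ
      map_add' := gZ.map_add
      map_smul' := hgZsmul } with hgmap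
  -- fmap ∘ gmap = id
  have hfg : fmap.comp gmap = LinearMap.id := by
    apply LinearMap.ext
    intro x
    have key : ∀ y : V ⊗[ℤ] M, fmap (gZ y) = y := by
      intro y
      induction y using TensorProduct.induction_on with
      | zero => rw [map_zero, map_zero]
      | tmul v m =>
        rw [hgZtmul, hfmap]
        rw [Finsupp.lsum_apply]
        rw [Finsupp.sum_mapRange_index (fun m' => map_zero (φ m'))]
        calc ((s m).sum fun m' c => φ m' (T v c))
            = (s m).sum fun m' c => v ⊗ₜ[ℤ] (c • m') :=
              Finsupp.sum_congr fun m' _ => hφT m' v _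
          _ = v ⊗ₜ[ℤ] ((s m).sum fun m' c => c • m') := by
              rw [Finsupp.sum, Finsupp.sum, TensorProduct.tmul_sum]
          _ = v ⊗ₜ[ℤ] m := by rw [hsm]
      | add x y ihx ihy => rw [map_add, map_add, ihx, ihy]
    exact key x
  exact Module.Projective.of_split gmap fmap hfg
end

section
/- Let R be a unital ring, G a finite group, and θ : G → Aut(R) a group homomorphism into the ring automorphisms of R. Let M be a left R_θ[G]-module whose restriction along the inclusion R ⊆ R_θ[G] (r ↦ r·1_G) is a projective left R-module. Then ℤ[G] ⊗_ℤ M, equipped with the semi-diagonal action, is a projective left R_θ[G]-module. -/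
/-!
Write `e r = r·1` and `u g = 1·g`, so that `r·g = e r * u g` and `u g * e r = e (θ g r) * u g`.
Choose an `R`-linear section `s` of `(M →₀ R) → M`. Then
`g ⊗ m ↦ u g • (s (u g⁻¹ • m)).mapRange e` is an `R_θ[G]`-linear section of the surjection
`(M →₀ R_θ[G]) → ℤ[G] ⊗ M`, `single m 1 ↦ 1 ⊗ m`, so `ℤ[G] ⊗ M` is a direct summand of a free
module. Linearity only has to be checked on the ring generators `e r` and `u g`; for `e r` it
rests on `u g⁻¹ * e r = e (θ g⁻¹ r) * u g⁻¹`, which lets `e r` pass through the `R`-linear `s`.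
-/

namespace SkewGroupRing

theorem skewOne_eq_single {R G : Type*} [Ring R] [Group G] [DecidableEq G] :
    skewOne R G = Pi.single 1 1 := by
  ext k
  simp [skewOne, Pi.single_apply]

variable {R G : Type*} [Ring R] [Group G] [Fintype G] [DecidableEq G] (θ : G →* RingAut R)

theorem skewConv_single_single (g h : G) (r s : R) :
    skewConv θ (Pi.single g r) (Pi.single h s) = Pi.single (g * h) (r * θ g s) := by
  ext k
  rw [skewConv, Finset.sum_eq_single g (fun b _ hb => by rw [Pi.single_eq_of_ne hb, zero_mul])
    (by simp)]
  by_cases hk : k = g * h <;> simp [inv_mul_eq_iff_eq_mul, hk]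

variable {θ} {A : Type*} [Ring A] {Φ : (G → R) ≃+ A}

theorem single_mul_single (hΦmul : ∀ f f' : G → R, Φ f * Φ f' = Φ (skewConv θ f f'))
    (g h : G) (r s : R) :
    Φ (Pi.single g r) * Φ (Pi.single h s) = Φ (Pi.single (g * h) (r * θ g s)) := by
  rw [hΦmul, skewConv_single_single]

variable (hΦmul : ∀ f f' : G → R, Φ f * Φ f' = Φ (skewConv θ f f')) (hΦone : Φ (skewOne R G) = 1)

def coeffHom : R →+* A where
  toFun r := Φ (Pi.single 1 r)
  map_one' := by rw [← hΦone, skewOne_eq_single]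
  map_mul' r s := by simp only [single_mul_single hΦmul, mul_one, map_one, RingAut.one_apply]
  map_zero' := by simp
  map_add' r s := by simp [Pi.single_add]

def groupHom : G →* A where
  toFun g := Φ (Pi.single g 1)
  map_one' := by rw [← hΦone, skewOne_eq_single]
  map_mul' g h := by rw [single_mul_single hΦmul, map_one, mul_one]

theorem single_eq_coeffHom_mul_groupHom (g : G) (r : R) :
    Φ (Pi.single g r) = coeffHom hΦmul hΦone r * groupHom hΦmul hΦone g := by
  simp [coeffHom, groupHom, single_mul_single hΦmul]

theorem groupHom_mul_coeffHom (g : G) (r : R) :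
    groupHom hΦmul hΦone g * coeffHom hΦmul hΦone r =
      coeffHom hΦmul hΦone (θ g r) * groupHom hΦmul hΦone g := by
  simp [coeffHom, groupHom, single_mul_single hΦmul]

theorem closure_range_coeffHom_union_range_groupHom :
    Subring.closure (Set.range (coeffHom hΦmul hΦone) ∪ Set.range (groupHom hΦmul hΦone)) = ⊤ := by
  refine eq_top_iff.2 fun a _ => ?_
  rw [← Φ.apply_symm_apply a, ← Finset.univ_sum_single (Φ.symm a), map_sum]
  refine Subring.sum_mem _ fun g _ => ?_
  rw [single_eq_coeffHom_mul_groupHom hΦmul hΦone]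
  exact Subring.mul_mem _ (Subring.subset_closure (.inl ⟨_, rfl⟩))
    (Subring.subset_closure (.inr ⟨_, rfl⟩))

end SkewGroupRing

open TensorProduct

section EquivariantSubring

variable {A P Q : Type*} [Ring A] [AddCommGroup P] [AddCommGroup Q] [Module A P] [Module A Q]

def AddMonoidHom.equivariantSubring (f : P →+ Q) : Subring A where
  carrier := {a | ∀ p, f (a • p) = a • f p}
  mul_mem' {a b} ha hb p := by rw [mul_smul, ha, hb, mul_smul]
  one_mem' p := by rw [one_smul, one_smul]
  add_mem' {a b} ha hb p := by rw [add_smul, map_add, ha, hb, add_smul]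
  zero_mem' p := by rw [zero_smul, zero_smul, map_zero]
  neg_mem' {a} ha p := by rw [neg_smul, map_neg, ha, neg_smul]

def AddMonoidHom.toLinearMapOfClosure {s : Set A} (hs : Subring.closure s = ⊤) (f : P →+ Q)
    (hf : ∀ a ∈ s, ∀ p, f (a • p) = a • f p) : P →ₗ[A] Q where
  toFun := f
  map_add' := f.map_add
  map_smul' a := by
    have : Subring.closure s ≤ f.equivariantSubring := Subring.closure_le.2 hf
    exact this (hs ▸ Subring.mem_top a)

end EquivariantSubring

theorem MonoidAlgebra.tensor_addMonoidHom_ext {G M X : Type*} [AddCommGroup M] [AddCommGroup X]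
    {f f' : MonoidAlgebra ℤ G ⊗[ℤ] M →+ X}
    (h : ∀ g m, f (MonoidAlgebra.single g 1 ⊗ₜ m) = f' (MonoidAlgebra.single g 1 ⊗ₜ m)) :
    f = f' :=
  AddMonoidHom.toIntLinearMap_injective <|
    TensorProduct.ext <| (MonoidAlgebra.basis G ℤ).ext fun g => LinearMap.ext (h g)

theorem MonoidAlgebra.tensor_map_smul_of_single_tmul {G M X S : Type*} [AddCommGroup M]
    [AddCommGroup X] [DistribSMul S (MonoidAlgebra ℤ G ⊗[ℤ] M)] [DistribSMul S X]
    (f : MonoidAlgebra ℤ G ⊗[ℤ] M →+ X) (a : S)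
    (h : ∀ g m, f (a • MonoidAlgebra.single g 1 ⊗ₜ m) = a • f (MonoidAlgebra.single g 1 ⊗ₜ m))
    (t : MonoidAlgebra ℤ G ⊗[ℤ] M) : f (a • t) = a • f t :=
  DFunLike.congr_fun (MonoidAlgebra.tensor_addMonoidHom_ext
    (f := f.comp (DistribSMul.toAddMonoidHom _ a))
    (f' := (DistribSMul.toAddMonoidHom _ a).comp f) h) t

theorem Finsupp.linearCombination_mapRange {R A N P : Type*} [Semiring R] [Semiring A]
    [AddCommMonoid N] [AddCommMonoid P] [Module R N] [Module A P] (e : R →+* A) (φ : N →ₛₗ[e] P)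
    (x : N →₀ R) :
    linearCombination A φ (x.mapRange e e.map_zero) = φ (linearCombination R id x) := by
  induction x using Finsupp.induction_linear with
  | zero => simp
  | add x y hx hy => rw [mapRange_add e.map_add, map_add, hx, hy, map_add, map_add]
  | single n r => simp

section InducedModule

variable {R A G M : Type*} [Ring R] [Ring A] [Group G] [AddCommGroup M] [Module A M] [Module R M]
  (e : R →+* A) (u : G →* A)

theorem groupHom_mul_coeff_inv (θ : G → R → R) (hcomm : ∀ g r, u g * e r = e (θ g r) * u g)
    (g : G) (r : R) : u g * e (θ g⁻¹ r) = e r * u g := by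
  calc u g * e (θ g⁻¹ r) = u g * (e (θ g⁻¹ r) * u g⁻¹) * u g := by
        simp [mul_assoc, ← map_mul]
    _ = e r * u g := by simp [← hcomm, ← mul_assoc, ← map_mul]

noncomputable def groupRingTensorSection (s : M →ₗ[R] M →₀ R) :
    MonoidAlgebra ℤ G ⊗[ℤ] M →+ (M →₀ A) :=
  (TensorProduct.lift <| (MonoidAlgebra.basis G ℤ).constr ℤ fun g =>
    (AddMonoidHom.mk' (fun m => u g • (s (u g⁻¹ • m)).mapRange e e.map_zero)
      fun m m' => by simp only [smul_add, map_add, Finsupp.mapRange_add e.map_add]).toIntLinearMap)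
    |>.toAddMonoidHom

theorem groupRingTensorSection_single_tmul (s : M →ₗ[R] M →₀ R) (g : G) (m : M) :
    groupRingTensorSection e u s (MonoidAlgebra.single g 1 ⊗ₜ m) =
      u g • (s (u g⁻¹ • m)).mapRange e e.map_zero := by
  rw [groupRingTensorSection, LinearMap.toAddMonoidHom_coe, TensorProduct.lift.tmul,
    ← MonoidAlgebra.basis_apply, Module.Basis.constr_basis]
  rfl

variable [Module A (MonoidAlgebra ℤ G ⊗[ℤ] M)]

theorem groupRingTensorSection_coeff_smul (θ : G → R → R)
    (hcomm : ∀ g r, u g * e r = e (θ g r) * u g) (hres : ∀ (r : R) (m : M), r • m = e r • m)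
    (he : ∀ r v (m : M), e r • (v ⊗ₜ[ℤ] m : MonoidAlgebra ℤ G ⊗[ℤ] M) = v ⊗ₜ (e r • m))
    (s : M →ₗ[R] M →₀ R) (r : R) (t : MonoidAlgebra ℤ G ⊗[ℤ] M) :
    groupRingTensorSection e u s (e r • t) = e r • groupRingTensorSection e u s t := by
  refine MonoidAlgebra.tensor_map_smul_of_single_tmul _ _ (fun g m => ?_) t
  rw [he, groupRingTensorSection_single_tmul, groupRingTensorSection_single_tmul, smul_smul, hcomm,
    mul_smul, ← hres, map_smul, Finsupp.mapRange_smul' _ (e _) _ (map_mul e _), smul_smul,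
    groupHom_mul_coeff_inv e u θ hcomm, mul_smul]

theorem groupRingTensorSection_groupHom_smul
    (hu : ∀ g v (m : M), u g • (v ⊗ₜ[ℤ] m : MonoidAlgebra ℤ G ⊗[ℤ] M) =
      (MonoidAlgebra.single g 1 * v) ⊗ₜ (u g • m))
    (s : M →ₗ[R] M →₀ R) (h : G) (t : MonoidAlgebra ℤ G ⊗[ℤ] M) :
    groupRingTensorSection e u s (u h • t) = u h • groupRingTensorSection e u s t := by
  refine MonoidAlgebra.tensor_map_smul_of_single_tmul _ _ (fun g m => ?_) t
  rw [hu, MonoidAlgebra.single_mul_single, one_mul, groupRingTensorSection_single_tmul,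
    groupRingTensorSection_single_tmul, smul_smul, ← map_mul, smul_smul, ← map_mul, mul_inv_rev,
    inv_mul_cancel_right]

theorem projective_groupRing_tensor_of_projective (θ : G → R → R)
    (hcomm : ∀ g r, u g * e r = e (θ g r) * u g)
    (hgen : Subring.closure (Set.range e ∪ Set.range u) = ⊤)
    (hres : ∀ (r : R) (m : M), r • m = e r • m)
    (he : ∀ r v (m : M), e r • (v ⊗ₜ[ℤ] m : MonoidAlgebra ℤ G ⊗[ℤ] M) = v ⊗ₜ (e r • m))
    (hu : ∀ g v (m : M), u g • (v ⊗ₜ[ℤ] m : MonoidAlgebra ℤ G ⊗[ℤ] M) =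
      (MonoidAlgebra.single g 1 * v) ⊗ₜ (u g • m))
    [Module.Projective R M] : Module.Projective A (MonoidAlgebra ℤ G ⊗[ℤ] M) := by
  obtain ⟨s, hs⟩ := ‹Module.Projective R M›
  let σ : MonoidAlgebra ℤ G ⊗[ℤ] M →ₗ[A] M →₀ A :=
    (groupRingTensorSection e u s).toLinearMapOfClosure hgen <| by
      rintro _ (⟨r, rfl⟩ | ⟨h, rfl⟩)
      exacts [groupRingTensorSection_coeff_smul e u θ hcomm hres he s r,
        groupRingTensorSection_groupHom_smul e u hu s h]
  let φ : M →ₛₗ[e] MonoidAlgebra ℤ G ⊗[ℤ] M :=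
    { toFun m := 1 ⊗ₜ m
      map_add' := tmul_add 1
      map_smul' r m := by rw [hres, he] }
  refine .of_split σ (Finsupp.linearCombination A φ) (LinearMap.toAddMonoidHom_injective <|
    MonoidAlgebra.tensor_addMonoidHom_ext fun g m => ?_)
  change Finsupp.linearCombination A φ (groupRingTensorSection e u s _) = _
  rw [groupRingTensorSection_single_tmul, map_smul, Finsupp.linearCombination_mapRange, hs]
  change u g • (1 ⊗ₜ (u g⁻¹ • m) : MonoidAlgebra ℤ G ⊗[ℤ] M) = _
  rw [hu, mul_one, smul_smul, ← map_mul, mul_inv_cancel, map_one, one_smul]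
  rfl

end InducedModule

theorem semidiagonal_groupRing_tensor_projective_of_R_projective
    (R : Type) [Ring R] (G : Type) [Group G] [Fintype G] [DecidableEq G]
    (θ : G →* RingAut R)
    -- `A` is the skew group ring `R_θ[G]`:
    (A : Type) [Ring A] (Φ : (G → R) ≃+ A)
    (hΦmul : ∀ f f' : G → R, Φ f * Φ f' = Φ (skewConv θ f f'))
    (hΦone : Φ (skewOne R G) = 1)
    -- `M` is a left `R_θ[G]`-module:
    (M : Type) [AddCommGroup M] [Module A M]
    -- the restriction of scalars of `M` along `r ↦ r·1_G`:
    [Module R M]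
    (hres : ∀ (r : R) (m : M), r • m = (Φ (Pi.single (1 : G) r)) • m)
    -- `ℤ[G] ⊗_ℤ M` carries the semi-diagonal `R_θ[G]`-action
    -- (the `ℤ[G]`-action on `V = ℤ[G]` itself being left multiplication):
    [Module A (TensorProduct ℤ (MonoidAlgebra ℤ G) M)]
    (hsemi : ∀ (r : R) (g : G) (v : MonoidAlgebra ℤ G) (m : M),
      (Φ (Pi.single g r)) • (v ⊗ₜ[ℤ] m) =
        ((MonoidAlgebra.single g (1 : ℤ)) * v) ⊗ₜ[ℤ] ((Φ (Pi.single g r)) • m))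
    -- `M` is projective as a left `R`-module:
    (hM : Module.Projective R M) :
    Module.Projective A (TensorProduct ℤ (MonoidAlgebra ℤ G) M) :=
  projective_groupRing_tensor_of_projective (SkewGroupRing.coeffHom hΦmul hΦone)
    (SkewGroupRing.groupHom hΦmul hΦone) (fun g => θ g)
    (SkewGroupRing.groupHom_mul_coeffHom hΦmul hΦone)
    (SkewGroupRing.closure_range_coeffHom_union_range_groupHom hΦmul hΦone) hres
    (fun r v m => by
      rw [SkewGroupRing.coeffHom]; simpa [← MonoidAlgebra.one_def] using hsemi r 1 v m)
    (fun g => hsemi 1 g)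
end

section
/- For p = 2, the ℤ-linear map Ĥ : Eℤ_2 ⊗ I → I ⊗ I defined on generators a ∈ {1, θ} of the degree-k summand (Eℤ_2)_k by: Ĥ(a ⊗ s_j) = s_j ⊗ s_j for a ∈ (Eℤ_2)_0 and j = 0,1; Ĥ(a ⊗ s_j) = 0 for a ∈ (Eℤ_2)_k with k ≥ 1 and j = 0,1; Ĥ(1 ⊗ s) = s₁ ⊗ s + s ⊗ s₀ and Ĥ(θ ⊗ s) = s ⊗ s₁ + s₀ ⊗ s for 1, θ ∈ (Eℤ_2)_0; Ĥ(1 ⊗ s) = s ⊗ s and Ĥ(θ ⊗ s) = −s ⊗ s for 1, θ ∈ (Eℤ_2)_1; and Ĥ(a ⊗ s) = 0 for a ∈ (Eℤ_2)_k with k ≥ 2; is a chain map and is equivariant for the ℤ/2-actions (θ acting on Eℤ_2 ⊗ I through the Eℤ_2 factor, and on I ⊗ I by the signed transposition θ·(x ⊗ y) = (−1)^{|x||y|} y ⊗ x). -/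
/-- A chain complex of abelian groups, indexed by `ℤ`, with differential presented as a
family `d i j : X i → X j` for all pairs of degrees, vanishing unless `j = i - 1`,
and squaring to zero. -/
structure Cx : Type 1 where
  X : ℤ → Type
  grp : ∀ n, AddCommGroup (X n)
  d : ∀ i j : ℤ, X i →+ X j
  d_off : ∀ i j, j ≠ i - 1 → d i j = 0
  dsq : ∀ i j k (x : X i), d j k (d i j x) = 0

attribute [instance] Cx.grp

/-- A chain map between chain complexes of abelian groups. -/
structure ChainMap (C D : Cx) where
  f : ∀ n, C.X n →+ D.X n
  comm : ∀ i j (x : C.X i), f j (C.d i j x) = D.d i j (f i x)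

/-- A chain homotopy from `f₀` to `f₁`, presented as a family `h i j : C i → D j`
vanishing unless `j = i + 1` and satisfying `d∘h + h∘d = f₁ - f₀`. -/
structure Htpy {C D : Cx} (f₀ f₁ : ChainMap C D) where
  h : ∀ i j : ℤ, C.X i →+ D.X j
  h_off : ∀ i j, j ≠ i + 1 → h i j = 0
  cond : ∀ n (x : C.X n),
    D.d (n + 1) n (h n (n + 1) x) + h (n - 1) n (C.d n (n - 1) x) =
      f₁.f n x - f₀.f n x

/-- `(-1)^i` for `i : ℤ`. -/
def sgn (i : ℤ) : ℤ := if Even i then 1 else -1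

/-- Place `x : X m` in the `j`-th slot of the family `v`, reindexing along
`Function.update k j m`. -/
def updD {p : ℕ} {X : ℤ → Type} (k : Fin p → ℤ) (v : ∀ i, X (k i)) (j : Fin p) {m : ℤ}
    (x : X m) : ∀ i, X (Function.update k j m i) :=
  fun i =>
    if h : i = j then cast (congrArg X (by rw [h, Function.update_self])) x
    else cast (congrArg X (Function.update_of_ne h m k).symm) (v i)

lemma sum_update {p : ℕ} (k : Fin p → ℤ) (j : Fin p) (m : ℤ) :
    ∑ i, Function.update k j m i = (∑ i, k i) - k j + m := by
  rw [Finset.sum_update_of_mem (Finset.mem_univ j), Finset.sdiff_singleton_eq_erase,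
    ← Finset.sum_erase_add Finset.univ k (Finset.mem_univ j)]
  ring

/-- `T` realizes the tensor product `C ⊗ D` of chain complexes of abelian groups
(with the Koszul sign convention), via the pure-tensor maps `ι`. -/
structure IsTensor (C D T : Cx) where
  ι : ∀ (i j n : ℤ), i + j = n → C.X i → D.X j → T.X n
  ι_addl : ∀ i j n h x x' y, ι i j n h (x + x') y = ι i j n h x y + ι i j n h x' y
  ι_addr : ∀ i j n h x y y', ι i j n h x (y + y') = ι i j n h x y + ι i j n h x y'
  ι_d : ∀ i j n h x y, T.d n (n - 1) (ι i j n h x y) =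
      ι (i - 1) j (n - 1) (by omega) (C.d i (i - 1) x) y +
        sgn i • ι i (j - 1) (n - 1) (by omega) x (D.d j (j - 1) y)
  univ : ∀ (A : ℤ → Type) [∀ n, AddCommGroup (A n)]
      (φ : ∀ (i j n : ℤ), i + j = n → C.X i → D.X j → A n),
      (∀ i j n h x x' y, φ i j n h (x + x') y = φ i j n h x y + φ i j n h x' y) →
      (∀ i j n h x y y', φ i j n h x (y + y') = φ i j n h x y + φ i j n h x y') →
      ∃! ψ : ∀ n, T.X n →+ A n, ∀ i j n h x y, ψ n (ι i j n h x y) = φ i j n h x y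

/-- `T` realizes the `p`-fold tensor power `C^{⊗p}` of a chain complex of abelian
groups (with the Koszul sign convention), via the pure-tensor maps `ι`. -/
structure IsTensorPow (C : Cx) (p : ℕ) (T : Cx) where
  ι : ∀ (k : Fin p → ℤ) (n : ℤ), (∑ i, k i) = n → (∀ i, C.X (k i)) → T.X n
  ι_add : ∀ k n h (v : ∀ i, C.X (k i)) (j : Fin p) (x y : C.X (k j)),
    ι k n h (Function.update v j (x + y)) =
      ι k n h (Function.update v j x) + ι k n h (Function.update v j y)
  ι_d : ∀ k n h v, T.d n (n - 1) (ι k n h v) =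
    ∑ j : Fin p, sgn (∑ i ∈ Finset.univ.filter (· < j), k i) •
      ι (Function.update k j (k j - 1)) (n - 1) (by rw [sum_update]; omega)
        (updD k v j (C.d (k j) (k j - 1) (v j)))
  univ : ∀ (A : ℤ → Type) [∀ n, AddCommGroup (A n)]
      (φ : ∀ (k : Fin p → ℤ) (n : ℤ), (∑ i, k i) = n → (∀ i, C.X (k i)) → A n),
      (∀ k n h (v : ∀ i, C.X (k i)) (j : Fin p) (x y : C.X (k j)),
        φ k n h (Function.update v j (x + y)) =
          φ k n h (Function.update v j x) + φ k n h (Function.update v j y)) →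
      ∃! ψ : ∀ n, T.X n →+ A n, ∀ k n h v, ψ n (ι k n h v) = φ k n h v

/-- `I` is the interval complex: `I_0 = ℤ² = ℤs₀ ⊕ ℤs₁`, `I_1 = ℤ = ℤs`, `I_k = 0`
otherwise, with `d s = s₁ - s₀`. -/
structure IsInterval (I : Cx) (s₀ s₁ : I.X 0) (s : I.X 1) : Prop where
  basis0 : ∀ x : I.X 0, ∃! ab : ℤ × ℤ, x = ab.1 • s₀ + ab.2 • s₁
  basis1 : ∀ x : I.X 1, ∃! a : ℤ, x = a • s
  degzero : ∀ n : ℤ, n ≠ 0 → n ≠ 1 → ∀ x : I.X n, x = 0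
  ds : I.d 1 0 s = s₁ - s₀

/-- The generator `θ` of the group ring `ℤ[ℤ_p]`. -/
noncomputable def θel (p : ℕ) : MonoidAlgebra ℤ (Multiplicative (ZMod p)) :=
  MonoidAlgebra.single (Multiplicative.ofAdd (1 : ZMod p)) 1

/-- `E` realizes the standard complex `Eℤ_p` (period-`p` resolution of `ℤ`):
`E_n = ℤ[ℤ_p]` for `n ≥ 0` (via the additive isomorphisms `e n`), `E_n = 0` for `n < 0`,
with differentials alternately `1 − θ` (odd-to-even) and `1 + θ + ⋯ + θ^{p−1}`
(even-to-odd). -/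
structure IsStdRes (p : ℕ) (E : Cx)
    (e : ∀ n : ℤ, MonoidAlgebra ℤ (Multiplicative (ZMod p)) →+ E.X n) : Prop where
  bij : ∀ n, 0 ≤ n → Function.Bijective (e n)
  neg : ∀ n, n < 0 → ∀ x : E.X n, x = 0
  dspec : ∀ k : ℤ, 1 ≤ k → ∀ a, E.d k (k - 1) (e k a) =
    e (k - 1) ((if Odd k then 1 - θel p else ∑ i ∈ Finset.range p, θel p ^ i) * a)

/-- Degrees of a pure tensor word in a power of the interval complex: positions marked
`true` carry the degree-1 generator `s`, positions marked `false` a degree-0 element. -/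
def wdeg {p : ℕ} (w : Fin p → Bool) : Fin p → ℤ := fun i => if w i then 1 else 0

/-- The pure-tensor word family with `s` at the positions marked `true` by `w` and the
degree-0 element `a i` at the positions marked `false`. -/
def wfam {p : ℕ} (I : Cx) (s : I.X 1) (a : Fin p → I.X 0) (w : Fin p → Bool) :
    ∀ i, I.X (wdeg w i) :=
  fun i =>
    if h : w i then cast (congrArg I.X (by simp [wdeg, h])) s
    else cast (congrArg I.X (by simp [wdeg, h])) (a i)

/-!
`Ĥ` is prescribed on the generators `1, θ` of `(Eℤ₂)_k ≅ ℤ[ℤ₂]` and on the bases `s₀, s₁` and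
`s` of `I`; extended biadditively, the universal property of `Eℤ₂ ⊗ I` makes it a map of graded
groups. Both `d ∘ Ĥ` and `Ĥ ∘ d`, and both `Ĥ ∘ θ` and `θ ∘ Ĥ`, are determined by their values on
pure tensors `a ⊗ y`, so only these have to be compared.

Geometrically `Ĥ(1 ⊗ s)` and `Ĥ(θ ⊗ s)` are the two edge paths of the square `s ⊗ s` from
`s₀ ⊗ s₀` to `s₁ ⊗ s₁`, and the signed swap exchanges them. The chain-map identities come down to
`d(s ⊗ s) = lower path − upper path`, to both paths having boundary `s₁ ⊗ s₁ − s₀ ⊗ s₀`, and to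
`1 − θ` killing `Ĥ` on `(Eℤ₂)₀ ⊗ I₀`, where `1` and `θ` have the same image, and `1 + θ` killing
it on `(Eℤ₂)₁ ⊗ I₁`, where their images are opposite.
-/

namespace IsTensor

variable {C D T : Cx} (bt : IsTensor C D T)

lemma ι_zero_left (i j n : ℤ) (h : i + j = n) (y : D.X j) : bt.ι i j n h 0 y = 0 := by
  simpa using bt.ι_addl i j n h 0 0 y

theorem hom_ext {A : ℤ → Type} [∀ n, AddCommGroup (A n)] {ψ ψ' : ∀ n, T.X n →+ A n}
    (h : ∀ i j n hn x y, ψ n (bt.ι i j n hn x y) = ψ' n (bt.ι i j n hn x y)) : ψ = ψ' := by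
  obtain ⟨χ, -, hχ⟩ := bt.univ A (fun i j n hn x y => ψ' n (bt.ι i j n hn x y))
    (by simp [bt.ι_addl]) (by simp [bt.ι_addr])
  exact (hχ ψ h).trans (hχ ψ' fun _ _ _ _ _ _ => rfl).symm

variable {T' : Cx} (φ : ∀ i j n : ℤ, i + j = n → C.X i → D.X j → T'.X n)
  (hl : ∀ i j n h x x' y, φ i j n h (x + x') y = φ i j n h x y + φ i j n h x' y)
  (hr : ∀ i j n h x y y', φ i j n h x (y + y') = φ i j n h x y + φ i j n h x y')
  (hd : ∀ i j (x : C.X i) (y : D.X j),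
    φ (i - 1) j (i + j - 1) (by omega) (C.d i (i - 1) x) y +
        sgn i • φ i (j - 1) (i + j - 1) (by omega) x (D.d j (j - 1) y) =
      T'.d (i + j) (i + j - 1) (φ i j (i + j) rfl x y))

noncomputable def liftChainMap : ChainMap T T' where
  f := (bt.univ T'.X φ hl hr).exists.choose
  comm i j z := by
    have hι := (bt.univ T'.X φ hl hr).exists.choose_spec
    by_cases hij : j = i - 1
    · subst hij
      have key := bt.hom_ext (A := fun n => T'.X (n - 1))
        (ψ := fun n => ((bt.univ T'.X φ hl hr).exists.choose (n - 1)).comp (T.d n (n - 1)))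
        (ψ' := fun n => (T'.d n (n - 1)).comp ((bt.univ T'.X φ hl hr).exists.choose n))
        fun i j n hn x y => by
          subst hn
          simp [bt.ι_d, hι, hd]
      exact DFunLike.congr_fun (congrFun key i) z
    · simp [T.d_off i j hij, T'.d_off i j hij]

@[simp]
lemma liftChainMap_ι (i j n : ℤ) (h : i + j = n) (x : C.X i) (y : D.X j) :
    (bt.liftChainMap φ hl hr hd).f n (bt.ι i j n h x y) = φ i j n h x y :=
  (bt.univ T'.X φ hl hr).exists.choose_spec i j n h x y

end IsTensor

namespace IsTensorPow

variable {C T : Cx} (tp : IsTensorPow C 2 T)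

def tmul {k₀ k₁ : ℤ} (x : C.X k₀) (y : C.X k₁) (n : ℤ) (h : k₀ + k₁ = n) : T.X n :=
  tp.ι ![k₀, k₁] n (by simpa [Fin.sum_univ_two] using h) (Fin.cons x (Fin.cons y finZeroElim))

lemma ι_eq_tmul (k : Fin 2 → ℤ) (n : ℤ) (h : ∑ i, k i = n) (v : ∀ i, C.X (k i)) :
    tp.ι k n h v = tp.tmul (v 0) (v 1) n (by simpa [Fin.sum_univ_two] using h) := by
  obtain ⟨k₀, k₁, rfl⟩ : ∃ k₀ k₁, k = ![k₀, k₁] := ⟨k 0, k 1, by ext i; fin_cases i <;> rfl⟩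
  congr
  ext i
  fin_cases i <;> rfl

lemma tmul_add_left {k₀ k₁ : ℤ} (x x' : C.X k₀) (y : C.X k₁) (n : ℤ) (h : k₀ + k₁ = n) :
    tp.tmul (x + x') y n h = tp.tmul x y n h + tp.tmul x' y n h := by
  have key := tp.ι_add ![k₀, k₁] n (by simpa [Fin.sum_univ_two] using h)
    (Fin.cons x (Fin.cons y finZeroElim)) 0 x x'
  unfold tmul
  convert key using 3 <;> funext i <;> fin_cases i <;> rfl

lemma tmul_add_right {k₀ k₁ : ℤ} (x : C.X k₀) (y y' : C.X k₁) (n : ℤ) (h : k₀ + k₁ = n) :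
    tp.tmul x (y + y') n h = tp.tmul x y n h + tp.tmul x y' n h := by
  have key := tp.ι_add ![k₀, k₁] n (by simpa [Fin.sum_univ_two] using h)
    (Fin.cons x (Fin.cons y finZeroElim)) 1 y y'
  unfold tmul
  convert key using 3 <;> funext i <;> fin_cases i <;> rfl

lemma tmul_zero_left {k₀ k₁ : ℤ} (y : C.X k₁) (n : ℤ) (h : k₀ + k₁ = n) :
    tp.tmul (0 : C.X k₀) y n h = 0 := by
  simpa using tp.tmul_add_left 0 0 y n h

lemma tmul_zero_right {k₀ k₁ : ℤ} (x : C.X k₀) (n : ℤ) (h : k₀ + k₁ = n) :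
    tp.tmul x (0 : C.X k₁) n h = 0 := by
  simpa using tp.tmul_add_right x 0 0 n h

lemma tmul_sub_left {k₀ k₁ : ℤ} (x x' : C.X k₀) (y : C.X k₁) (n : ℤ) (h : k₀ + k₁ = n) :
    tp.tmul (x - x') y n h = tp.tmul x y n h - tp.tmul x' y n h :=
  (AddMonoidHom.mk' (tp.tmul · y n h) (tp.tmul_add_left · · y n h)).map_sub x x'

lemma tmul_sub_right {k₀ k₁ : ℤ} (x : C.X k₀) (y y' : C.X k₁) (n : ℤ) (h : k₀ + k₁ = n) :
    tp.tmul x (y - y') n h = tp.tmul x y n h - tp.tmul x y' n h :=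
  (AddMonoidHom.mk' (tp.tmul x · n h) (tp.tmul_add_right x · · n h)).map_sub y y'

lemma d_tmul {k₀ k₁ : ℤ} (x : C.X k₀) (y : C.X k₁) (n : ℤ) (h : k₀ + k₁ = n) :
    T.d n (n - 1) (tp.tmul x y n h) =
      tp.tmul (C.d k₀ (k₀ - 1) x) y (n - 1) (by omega) +
        sgn k₀ • tp.tmul x (C.d k₁ (k₁ - 1) y) (n - 1) (by omega) := by
  have h₀ : Finset.univ.filter (· < (0 : Fin 2)) = ∅ := by decide
  have h₁ : Finset.univ.filter (· < (1 : Fin 2)) = {0} := by decide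
  rw [tmul, tp.ι_d, Fin.sum_univ_two, h₀, h₁, ι_eq_tmul, ι_eq_tmul]
  simp only [Finset.sum_empty, Finset.sum_singleton]
  rw [show sgn 0 = 1 by decide, one_smul]
  rfl

def IsSignedSwap (Θ : ChainMap T T) : Prop :=
  ∀ {k₀ k₁ : ℤ} (x : C.X k₀) (y : C.X k₁) (n : ℤ) (h : k₀ + k₁ = n),
    Θ.f n (tp.tmul x y n h) = sgn (k₀ * k₁) • tp.tmul y x n (by omega)

lemma isSignedSwap_of_ι {Θ : ChainMap T T}
    (hΘ : ∀ k n (h : (∑ i, k i) = n) (v : ∀ i, C.X (k i)),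
      Θ.f n (tp.ι k n h v) =
        sgn (k 0 * k 1) •
          tp.ι (fun i => k (Equiv.swap 0 1 i)) n
            ((Equiv.sum_comp (Equiv.swap 0 1) k).trans h)
            (fun i => v (Equiv.swap 0 1 i))) :
    tp.IsSignedSwap Θ := by
  intro k₀ k₁ x y n h
  rw [tmul, hΘ, ι_eq_tmul]
  rfl

end IsTensorPow

abbrev ZC₂ := MonoidAlgebra ℤ (Multiplicative (ZMod 2))

namespace ZC₂

-- `a = coeff₀ a • 1 + coeff₁ a • θ`
noncomputable def coeff₀ : ZC₂ →+ ℤ :=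
  (Finsupp.applyAddHom 1).comp MonoidAlgebra.coeffAddEquiv.toAddMonoidHom

noncomputable def coeff₁ : ZC₂ →+ ℤ :=
  (Finsupp.applyAddHom (Multiplicative.ofAdd 1)).comp MonoidAlgebra.coeffAddEquiv.toAddMonoidHom

lemma coeff₀_apply (a : ZC₂) : coeff₀ a = a.coeff 1 := rfl

lemma coeff₁_apply (a : ZC₂) : coeff₁ a = a.coeff (Multiplicative.ofAdd 1) := rfl

lemma coeff₀_θ_mul (a : ZC₂) : coeff₀ (θel 2 * a) = coeff₁ a := by
  rw [coeff₀_apply, coeff₁_apply, θel, MonoidAlgebra.coeff_single_mul_apply, one_mul]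
  rfl

lemma coeff₁_θ_mul (a : ZC₂) : coeff₁ (θel 2 * a) = coeff₀ a := by
  rw [coeff₀_apply, coeff₁_apply, θel, MonoidAlgebra.coeff_single_mul_apply, one_mul,
    inv_mul_cancel]

lemma coeff₀_one : coeff₀ 1 = 1 := MonoidAlgebra.coeff_one_one

lemma coeff₁_one : coeff₁ 1 = 0 := by
  simp [coeff₁, MonoidAlgebra.one_def]

lemma coeff₀_θ : coeff₀ (θel 2) = 0 := by
  simpa [coeff₁_one] using coeff₀_θ_mul 1

lemma coeff₁_θ : coeff₁ (θel 2) = 1 := by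
  simpa [coeff₀_one] using coeff₁_θ_mul 1

section Lift

variable {A : Type*} [AddCommGroup A]

noncomputable def lift (u v : A) : ZC₂ →+ A :=
  (zmultiplesHom A u).comp coeff₀ + (zmultiplesHom A v).comp coeff₁

lemma lift_apply (u v : A) (a : ZC₂) : lift u v a = coeff₀ a • u + coeff₁ a • v := rfl

@[simp] lemma lift_one (u v : A) : lift u v 1 = u := by
  simp [lift_apply, coeff₀_one, coeff₁_one]

@[simp] lemma lift_θ (u v : A) : lift u v (θel 2) = v := by
  simp [lift_apply, coeff₀_θ, coeff₁_θ]

lemma lift_self_of_eq_one_or_eq_θ (u : A) {a : ZC₂} (ha : a = 1 ∨ a = θel 2) :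
    lift u u a = u := by
  rcases ha with rfl | rfl <;> simp

lemma lift_θ_mul (u v : A) (a : ZC₂) : lift u v (θel 2 * a) = lift v u a := by
  rw [lift_apply, lift_apply, coeff₀_θ_mul, coeff₁_θ_mul, add_comm]

lemma lift_one_sub_θ_mul (u v : A) (a : ZC₂) :
    lift u v ((1 - θel 2) * a) = lift (u - v) (v - u) a := by
  rw [sub_mul, one_mul, map_sub, lift_θ_mul]
  simp only [lift_apply]
  module

lemma lift_one_add_θ_mul (u v : A) (a : ZC₂) :
    lift u v ((1 + θel 2) * a) = lift (u + v) (u + v) a := by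
  rw [add_mul, one_mul, map_add, lift_θ_mul]
  simp only [lift_apply]
  module

@[simp] lemma lift_zero : lift (0 : A) 0 = 0 := by
  ext a
  simp [lift_apply]

lemma map_lift {B : Type*} [AddCommGroup B] (f : A →+ B) (u v : A) (a : ZC₂) :
    f (lift u v a) = lift (f u) (f v) a := by
  simp [lift_apply]

lemma lift_apply_apply {N : Type*} [AddCommGroup N] (f g : N →+ A) (a : ZC₂) (y : N) :
    lift f g a y = lift (f y) (g y) a :=
  map_lift (AddMonoidHom.eval y) f g a

end Lift

end ZC₂

namespace IsInterval

variable {I : Cx} {s₀ s₁ : I.X 0} {s : I.X 1}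

lemma d_zero (hI : IsInterval I s₀ s₁ s) (y : I.X 0) (j : ℤ) : I.d 0 j y = 0 := by
  by_cases hj : j = 0 - 1
  · exact hI.degzero j (by omega) (by omega) _
  · simp [I.d_off 0 j hj]

variable (hI : IsInterval I s₀ s₁ s)

noncomputable def coord₀ : I.X 0 →+ ℤ × ℤ :=
  AddMonoidHom.mk' (fun y => (hI.basis0 y).exists.choose) fun y y' => by
    refine ((hI.basis0 (y + y')).unique (hI.basis0 _).exists.choose_spec ?_)
    have hy := (hI.basis0 y).exists.choose_spec
    have hy' := (hI.basis0 y').exists.choose_spec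
    rw [Prod.fst_add, Prod.snd_add]
    linear_combination (norm := module) hy + hy'

lemma coord₀_eq_of {y : I.X 0} {ab : ℤ × ℤ} (h : y = ab.1 • s₀ + ab.2 • s₁) :
    hI.coord₀ y = ab :=
  (hI.basis0 y).unique (hI.basis0 y).exists.choose_spec h

lemma coord₀_s₀ : hI.coord₀ s₀ = (1, 0) := hI.coord₀_eq_of (by simp)

lemma coord₀_s₁ : hI.coord₀ s₁ = (0, 1) := hI.coord₀_eq_of (by simp)

noncomputable def coord₁ : I.X 1 →+ ℤ :=
  AddMonoidHom.mk' (fun y => (hI.basis1 y).exists.choose) fun y y' => by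
    refine ((hI.basis1 (y + y')).unique (hI.basis1 _).exists.choose_spec ?_)
    have hy := (hI.basis1 y).exists.choose_spec
    have hy' := (hI.basis1 y').exists.choose_spec
    linear_combination (norm := module) hy + hy'

lemma coord₁_smul (y : I.X 1) : hI.coord₁ y • s = y :=
  (hI.basis1 y).exists.choose_spec.symm

lemma coord₁_s : hI.coord₁ s = 1 :=
  (hI.basis1 s).unique (hI.basis1 s).exists.choose_spec (one_smul ℤ s).symm

lemma d_one (y : I.X 1) : I.d 1 0 y = hI.coord₁ y • (s₁ - s₀) := by
  conv_lhs => rw [← hI.coord₁_smul y]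
  rw [map_zsmul, hI.ds]

variable {A : Type*} [AddCommGroup A]

noncomputable def lift₀ (u v : A) : I.X 0 →+ A :=
  ((zmultiplesHom A u).coprod (zmultiplesHom A v)).comp hI.coord₀

lemma lift₀_apply (u v : A) (y : I.X 0) :
    hI.lift₀ u v y = (hI.coord₀ y).1 • u + (hI.coord₀ y).2 • v := rfl

@[simp] lemma lift₀_s₀ (u v : A) : hI.lift₀ u v s₀ = u := by
  simp [lift₀_apply, coord₀_s₀]

@[simp] lemma lift₀_s₁ (u v : A) : hI.lift₀ u v s₁ = v := by
  simp [lift₀_apply, coord₀_s₁]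

lemma map_lift₀ {B : Type*} [AddCommGroup B] (f : A →+ B) (u v : A) (y : I.X 0) :
    f (hI.lift₀ u v y) = hI.lift₀ (f u) (f v) y := by
  simp [lift₀_apply]

@[simp] lemma lift₀_zero : hI.lift₀ (0 : A) 0 = 0 := by
  ext y
  simp [lift₀_apply]

noncomputable def lift₁ (w : A) : I.X 1 →+ A := (zmultiplesHom A w).comp hI.coord₁

lemma lift₁_apply (w : A) (y : I.X 1) : hI.lift₁ w y = hI.coord₁ y • w := rfl

@[simp] lemma lift₁_s (w : A) : hI.lift₁ w s = w := by
  simp [lift₁_apply, coord₁_s]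

lemma map_lift₁ {B : Type*} [AddCommGroup B] (f : A →+ B) (w : A) (y : I.X 1) :
    f (hI.lift₁ w y) = hI.lift₁ (f w) y := by
  simp [lift₁_apply]

lemma lift₀_d (u v : A) (y : I.X 1) : hI.lift₀ u v (I.d 1 0 y) = hI.lift₁ (v - u) y := by
  rw [hI.d_one, map_zsmul, map_sub, lift₀_s₀, lift₀_s₁, lift₁_apply]

end IsInterval

namespace IsStdRes

variable {p : ℕ} {E : Cx} {e : ∀ n : ℤ, MonoidAlgebra ℤ (Multiplicative (ZMod p)) →+ E.X n}

noncomputable def coord (hE : IsStdRes p E e) (n : ℤ) (hn : 0 ≤ n) :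
    E.X n →+ MonoidAlgebra ℤ (Multiplicative (ZMod p)) :=
  (AddEquiv.ofBijective (e n) (hE.bij n hn)).symm.toAddMonoidHom

@[simp] lemma coord_e (hE : IsStdRes p E e) (n : ℤ) (hn : 0 ≤ n)
    (a : MonoidAlgebra ℤ (Multiplicative (ZMod p))) :
    hE.coord n hn (e n a) = a :=
  (AddEquiv.ofBijective (e n) (hE.bij n hn)).symm_apply_apply a

lemma d_e_of_odd (hE : IsStdRes p E e) {k : ℤ} (hk : Odd k) (hk₁ : 1 ≤ k)
    (a : MonoidAlgebra ℤ (Multiplicative (ZMod p))) :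
    E.d k (k - 1) (e k a) = e (k - 1) ((1 - θel p) * a) := by
  rw [hE.dspec k hk₁, if_pos hk]

lemma d_e_of_even (hE : IsStdRes p E e) {k : ℤ} (hk : Even k) (hk₁ : 1 ≤ k)
    (a : MonoidAlgebra ℤ (Multiplicative (ZMod p))) :
    E.d k (k - 1) (e k a) = e (k - 1) ((∑ i ∈ Finset.range p, θel p ^ i) * a) := by
  rw [hE.dspec k hk₁, if_neg (Int.not_odd_iff_even.mpr hk)]

end IsStdRes

section SingleBidegree

variable {X Y A : ℤ → Type} [∀ n, AddCommGroup (X n)] [∀ n, AddCommGroup (Y n)]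
  [∀ n, AddCommGroup (A n)]

def singleBidegree (p q r : ℤ) (f : X p →+ Y q →+ A r) (i j n : ℤ) (x : X i) (y : Y j) :
    A n :=
  if hij : i = p ∧ j = q ∧ n = r then
    cast (congrArg A hij.2.2.symm)
      (f (cast (congrArg X hij.1) x) (cast (congrArg Y hij.2.1) y))
  else 0

variable {p q r : ℤ} (f : X p →+ Y q →+ A r)

@[simp] lemma singleBidegree_same (x : X p) (y : Y q) :
    singleBidegree p q r f p q r x y = f x y := by
  simp [singleBidegree]

lemma singleBidegree_of_ne {i j n : ℤ} (hij : ¬(i = p ∧ j = q)) (x : X i) (y : Y j) :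
    singleBidegree p q r f i j n x y = 0 :=
  dif_neg fun h' => hij ⟨h'.1, h'.2.1⟩

lemma singleBidegree_add_left (i j n : ℤ) (x x' : X i) (y : Y j) :
    singleBidegree p q r f i j n (x + x') y =
      singleBidegree p q r f i j n x y + singleBidegree p q r f i j n x' y := by
  unfold singleBidegree
  split_ifs with hij
  · obtain ⟨rfl, rfl, rfl⟩ := hij
    simp
  · simp

lemma singleBidegree_add_right (i j n : ℤ) (x : X i) (y y' : Y j) :
    singleBidegree p q r f i j n x (y + y') =
      singleBidegree p q r f i j n x y + singleBidegree p q r f i j n x y' := by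
  unfold singleBidegree
  split_ifs with hij
  · obtain ⟨rfl, rfl, rfl⟩ := hij
    simp
  · simp

end SingleBidegree

namespace Hhat

section Chains

variable {I T : Cx} (tp : IsTensorPow I 2 T)

-- the two edge paths from `s₀ ⊗ s₀` to `s₁ ⊗ s₁` around the square `s ⊗ s`
def lowerPath (s₀ s₁ : I.X 0) (s : I.X 1) : T.X 1 := tp.tmul s₁ s 1 rfl + tp.tmul s s₀ 1 rfl

def upperPath (s₀ s₁ : I.X 0) (s : I.X 1) : T.X 1 := tp.tmul s s₁ 1 rfl + tp.tmul s₀ s 1 rfl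

variable {s₀ s₁ : I.X 0} {s : I.X 1}

noncomputable def diag (hI : IsInterval I s₀ s₁ s) : I.X 0 →+ T.X 0 :=
  hI.lift₀ (tp.tmul s₀ s₀ 0 rfl) (tp.tmul s₁ s₁ 0 rfl)

lemma d_diag (hI : IsInterval I s₀ s₁ s) (y : I.X 0) : T.d 0 (-1) (diag tp hI y) = 0 := by
  have hvert (z : I.X 0) : T.d 0 (-1) (tp.tmul z z 0 rfl) = 0 := by
    have h : T.d 0 (-1) (tp.tmul z z 0 rfl) =
        tp.tmul (I.d 0 (-1) z) z (-1) rfl + sgn 0 • tp.tmul z (I.d 0 (-1) z) (-1) rfl :=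
      tp.d_tmul z z 0 rfl
    rw [h, hI.d_zero, tp.tmul_zero_left, tp.tmul_zero_right, smul_zero, add_zero]
  rw [diag, hI.map_lift₀, hvert, hvert, hI.lift₀_zero, AddMonoidHom.zero_apply]

lemma d_lowerPath (hI : IsInterval I s₀ s₁ s) :
    T.d 1 0 (lowerPath tp s₀ s₁ s) = tp.tmul s₁ s₁ 0 rfl - tp.tmul s₀ s₀ 0 rfl := by
  have h₁ : T.d 1 0 (tp.tmul s₁ s 1 rfl) =
      tp.tmul (I.d 0 (-1) s₁) s 0 rfl + sgn 0 • tp.tmul s₁ (I.d 1 0 s) 0 rfl :=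
    tp.d_tmul s₁ s 1 rfl
  have h₂ : T.d 1 0 (tp.tmul s s₀ 1 rfl) =
      tp.tmul (I.d 1 0 s) s₀ 0 rfl + sgn 1 • tp.tmul s (I.d 0 (-1) s₀) 0 rfl :=
    tp.d_tmul s s₀ 1 rfl
  rw [lowerPath, map_add, h₁, h₂, hI.d_zero, hI.d_zero, hI.ds, tp.tmul_zero_left,
    tp.tmul_zero_right, tp.tmul_sub_left, tp.tmul_sub_right]
  simp [sgn]

lemma d_upperPath (hI : IsInterval I s₀ s₁ s) :
    T.d 1 0 (upperPath tp s₀ s₁ s) = tp.tmul s₁ s₁ 0 rfl - tp.tmul s₀ s₀ 0 rfl := by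
  have h₁ : T.d 1 0 (tp.tmul s s₁ 1 rfl) =
      tp.tmul (I.d 1 0 s) s₁ 0 rfl + sgn 1 • tp.tmul s (I.d 0 (-1) s₁) 0 rfl :=
    tp.d_tmul s s₁ 1 rfl
  have h₂ : T.d 1 0 (tp.tmul s₀ s 1 rfl) =
      tp.tmul (I.d 0 (-1) s₀) s 0 rfl + sgn 0 • tp.tmul s₀ (I.d 1 0 s) 0 rfl :=
    tp.d_tmul s₀ s 1 rfl
  rw [upperPath, map_add, h₁, h₂, hI.d_zero, hI.d_zero, hI.ds, tp.tmul_zero_left,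
    tp.tmul_zero_right, tp.tmul_sub_left, tp.tmul_sub_right]
  simp [sgn]

lemma d_square (hI : IsInterval I s₀ s₁ s) :
    T.d 2 1 (tp.tmul s s 2 rfl) = lowerPath tp s₀ s₁ s - upperPath tp s₀ s₁ s := by
  have h : T.d 2 1 (tp.tmul s s 2 rfl) =
      tp.tmul (I.d 1 0 s) s 1 rfl + sgn 1 • tp.tmul s (I.d 1 0 s) 1 rfl :=
    tp.d_tmul s s 2 rfl
  rw [h, hI.ds, tp.tmul_sub_left, tp.tmul_sub_right, lowerPath, upperPath]
  simp only [sgn, show ¬Even (1 : ℤ) by decide, if_false, neg_smul, one_smul]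
  abel

variable {tp} {Θ : ChainMap T T}

lemma swap_diag (hΘ : tp.IsSignedSwap Θ) (hI : IsInterval I s₀ s₁ s) (y : I.X 0) :
    Θ.f 0 (diag tp hI y) = diag tp hI y := by
  rw [diag, hI.map_lift₀, hΘ, hΘ]
  simp [sgn]

lemma swap_lowerPath (hΘ : tp.IsSignedSwap Θ) :
    Θ.f 1 (lowerPath tp s₀ s₁ s) = upperPath tp s₀ s₁ s := by
  rw [lowerPath, upperPath, map_add, hΘ, hΘ]
  simp [sgn]

lemma swap_upperPath (hΘ : tp.IsSignedSwap Θ) :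
    Θ.f 1 (upperPath tp s₀ s₁ s) = lowerPath tp s₀ s₁ s := by
  rw [lowerPath, upperPath, map_add, hΘ, hΘ]
  simp [sgn]

lemma swap_square (hΘ : tp.IsSignedSwap Θ) :
    Θ.f 2 (tp.tmul s s 2 rfl) = -tp.tmul s s 2 rfl := by
  rw [hΘ]
  simp [sgn]

end Chains

section Map

variable {I T E : Cx} {s₀ s₁ : I.X 0} {s : I.X 1} (hI : IsInterval I s₀ s₁ s)
  (tp : IsTensorPow I 2 T) {e : ∀ n : ℤ, ZC₂ →+ E.X n} (hE : IsStdRes 2 E e)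

-- `hat_kj` is `Ĥ` on `(Eℤ₂)_k ⊗ I_j`, given on `1, θ ∈ (Eℤ₂)_k` by the two arguments of `ZC₂.lift`
noncomputable def hat₀₀ : E.X 0 →+ I.X 0 →+ T.X 0 :=
  (ZC₂.lift (diag tp hI) (diag tp hI)).comp (hE.coord 0 le_rfl)

noncomputable def hat₀₁ : E.X 0 →+ I.X 1 →+ T.X 1 :=
  (ZC₂.lift (hI.lift₁ (lowerPath tp s₀ s₁ s)) (hI.lift₁ (upperPath tp s₀ s₁ s))).comp
    (hE.coord 0 le_rfl)

noncomputable def hat₁₁ : E.X 1 →+ I.X 1 →+ T.X 2 :=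
  (ZC₂.lift (hI.lift₁ (tp.tmul s s 2 rfl)) (hI.lift₁ (-tp.tmul s s 2 rfl))).comp
    (hE.coord 1 zero_le_one)

noncomputable def hatH : ∀ i j n : ℤ, i + j = n → E.X i → I.X j → T.X n := fun i j n _ x y =>
  singleBidegree 0 0 0 (hat₀₀ hI tp hE) i j n x y +
    singleBidegree 0 1 1 (hat₀₁ hI tp hE) i j n x y +
    singleBidegree 1 1 2 (hat₁₁ hI tp hE) i j n x y

lemma hatH_e_zero_zero (a : ZC₂) (y : I.X 0) :
    hatH hI tp hE 0 0 0 rfl (e 0 a) y = ZC₂.lift (diag tp hI y) (diag tp hI y) a := by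
  rw [hatH, singleBidegree_same, singleBidegree_of_ne _ (by decide),
    singleBidegree_of_ne _ (by decide)]
  simp [hat₀₀, ZC₂.lift_apply_apply]

lemma hatH_e_zero_one (a : ZC₂) (y : I.X 1) :
    hatH hI tp hE 0 1 1 rfl (e 0 a) y =
      ZC₂.lift (hI.lift₁ (lowerPath tp s₀ s₁ s) y) (hI.lift₁ (upperPath tp s₀ s₁ s) y) a := by
  rw [hatH, singleBidegree_same, singleBidegree_of_ne _ (by decide),
    singleBidegree_of_ne _ (by decide)]
  simp [hat₀₁, ZC₂.lift_apply_apply]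

lemma hatH_e_one_one (a : ZC₂) (y : I.X 1) :
    hatH hI tp hE 1 1 2 rfl (e 1 a) y =
      ZC₂.lift (hI.lift₁ (tp.tmul s s 2 rfl) y) (hI.lift₁ (-tp.tmul s s 2 rfl) y) a := by
  rw [hatH, singleBidegree_same, singleBidegree_of_ne _ (by decide),
    singleBidegree_of_ne _ (by decide)]
  simp [hat₁₁, ZC₂.lift_apply_apply]

lemma hatH_eq_zero {i j n : ℤ} (h : i + j = n)
    (hij : ¬(i = 0 ∧ j = 0) ∧ ¬(i = 0 ∧ j = 1) ∧ ¬(i = 1 ∧ j = 1)) (x : E.X i) (y : I.X j) :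
    hatH hI tp hE i j n h x y = 0 := by
  simp [hatH, singleBidegree_of_ne _ hij.1, singleBidegree_of_ne _ hij.2.1,
    singleBidegree_of_ne _ hij.2.2]

lemma hatH_add_left (i j n : ℤ) (h : i + j = n) (x x' : E.X i) (y : I.X j) :
    hatH hI tp hE i j n h (x + x') y =
      hatH hI tp hE i j n h x y + hatH hI tp hE i j n h x' y := by
  simp only [hatH, singleBidegree_add_left]
  abel

lemma hatH_add_right (i j n : ℤ) (h : i + j = n) (x : E.X i) (y y' : I.X j) :
    hatH hI tp hE i j n h x (y + y') =
      hatH hI tp hE i j n h x y + hatH hI tp hE i j n h x y' := by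
  simp only [hatH, singleBidegree_add_right]
  abel

lemma hatH_zero_left (i j n : ℤ) (h : i + j = n) (y : I.X j) :
    hatH hI tp hE i j n h 0 y = 0 := by
  simpa using hatH_add_left hI tp hE i j n h 0 0 y

lemma hatH_zero_right (i j n : ℤ) (h : i + j = n) (x : E.X i) :
    hatH hI tp hE i j n h x 0 = 0 := by
  simpa using hatH_add_right hI tp hE i j n h x 0 0

lemma leibniz_zero_zero (a : ZC₂) (y : I.X 0) :
    hatH hI tp hE (-1) 0 (-1) rfl (E.d 0 (-1) (e 0 a)) y +
        sgn 0 • hatH hI tp hE 0 (-1) (-1) rfl (e 0 a) (I.d 0 (-1) y) =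
      T.d 0 (-1) (hatH hI tp hE 0 0 0 rfl (e 0 a) y) := by
  rw [hatH_eq_zero _ _ _ _ (by decide), hatH_eq_zero _ _ _ _ (by decide), hatH_e_zero_zero,
    ZC₂.map_lift, d_diag, ZC₂.lift_zero]
  simp

lemma leibniz_one_zero (a : ZC₂) (y : I.X 0) :
    hatH hI tp hE 0 0 0 rfl (E.d 1 0 (e 1 a)) y +
        sgn 1 • hatH hI tp hE 1 (-1) 0 rfl (e 1 a) (I.d 0 (-1) y) =
      T.d 1 0 (hatH hI tp hE 1 0 1 rfl (e 1 a) y) := by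
  have hd : E.d 1 0 (e 1 a) = e 0 ((1 - θel 2) * a) := hE.d_e_of_odd odd_one le_rfl a
  rw [hd, hatH_e_zero_zero, ZC₂.lift_one_sub_θ_mul, sub_self, ZC₂.lift_zero,
    hatH_eq_zero _ _ _ _ (by decide), hatH_eq_zero _ _ _ _ (by decide)]
  simp

lemma leibniz_zero_one (a : ZC₂) (y : I.X 1) :
    hatH hI tp hE (-1) 1 0 rfl (E.d 0 (-1) (e 0 a)) y +
        sgn 0 • hatH hI tp hE 0 0 0 rfl (e 0 a) (I.d 1 0 y) =
      T.d 1 0 (hatH hI tp hE 0 1 1 rfl (e 0 a) y) := by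
  rw [hatH_eq_zero _ _ _ _ (by decide), hatH_e_zero_zero, hatH_e_zero_one, ZC₂.map_lift,
    hI.map_lift₁, hI.map_lift₁, d_lowerPath tp hI, d_upperPath tp hI, diag, hI.lift₀_d]
  simp [sgn]

lemma leibniz_one_one (a : ZC₂) (y : I.X 1) :
    hatH hI tp hE 0 1 1 rfl (E.d 1 0 (e 1 a)) y +
        sgn 1 • hatH hI tp hE 1 0 1 rfl (e 1 a) (I.d 1 0 y) =
      T.d 2 1 (hatH hI tp hE 1 1 2 rfl (e 1 a) y) := by
  have hd : E.d 1 0 (e 1 a) = e 0 ((1 - θel 2) * a) := hE.d_e_of_odd odd_one le_rfl a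
  rw [hd, hatH_e_zero_one, ZC₂.lift_one_sub_θ_mul, hatH_eq_zero _ _ _ _ (by decide),
    smul_zero, add_zero, hatH_e_one_one, ZC₂.map_lift, hI.map_lift₁, hI.map_lift₁, map_neg,
    d_square tp hI]
  simp only [hI.lift₁_apply, smul_sub, neg_sub]

lemma leibniz_two_one (a : ZC₂) (y : I.X 1) :
    hatH hI tp hE 1 1 2 rfl (E.d 2 1 (e 2 a)) y +
        sgn 2 • hatH hI tp hE 2 0 2 rfl (e 2 a) (I.d 1 0 y) =
      T.d 3 2 (hatH hI tp hE 2 1 3 rfl (e 2 a) y) := by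
  have hd : E.d 2 1 (e 2 a) = e 1 ((∑ i ∈ Finset.range 2, θel 2 ^ i) * a) :=
    hE.d_e_of_even even_two one_le_two a
  rw [hd, Finset.sum_range_succ, Finset.sum_range_one, pow_zero, pow_one, hatH_e_one_one,
    ZC₂.lift_one_add_θ_mul, hI.lift₁_apply, hI.lift₁_apply, smul_neg, add_neg_cancel,
    ZC₂.lift_zero, hatH_eq_zero _ _ _ _ (by decide), hatH_eq_zero _ _ _ _ (by decide)]
  simp

lemma hatH_leibniz (i j : ℤ) (x : E.X i) (y : I.X j) :
    hatH hI tp hE (i - 1) j (i + j - 1) (by omega) (E.d i (i - 1) x) y +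
        sgn i • hatH hI tp hE i (j - 1) (i + j - 1) (by omega) x (I.d j (j - 1) y) =
      T.d (i + j) (i + j - 1) (hatH hI tp hE i j (i + j) rfl x y) := by
  rcases lt_or_ge i 0 with hi | hi
  · obtain rfl := hE.neg i hi x
    simp [hatH_zero_left]
  obtain ⟨a, rfl⟩ := (hE.bij i hi).2 x
  by_cases hj : j = 0 ∨ j = 1
  swap
  · obtain rfl := hI.degzero j (by omega) (by omega) y
    simp [hatH_zero_right]
  by_cases hfar : 2 ≤ i ∧ j = 0 ∨ 3 ≤ i ∧ j = 1
  · rw [hatH_eq_zero _ _ _ _ (by omega), hatH_eq_zero _ _ _ _ (by omega),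
      hatH_eq_zero _ _ _ _ (by omega)]
    simp
  obtain ⟨rfl, rfl⟩ | ⟨rfl, rfl⟩ | ⟨rfl, rfl⟩ | ⟨rfl, rfl⟩ | ⟨rfl, rfl⟩ :
      i = 0 ∧ j = 0 ∨ i = 1 ∧ j = 0 ∨ i = 0 ∧ j = 1 ∨ i = 1 ∧ j = 1 ∨ i = 2 ∧ j = 1 := by
    omega
  -- the goals differ from the lemmas only by numeral arithmetic such as `1 - 1 = 0`, which the
  -- kernel evaluates
  · exact leibniz_zero_zero hI tp hE a y
  · exact leibniz_one_zero hI tp hE a y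
  · exact leibniz_zero_one hI tp hE a y
  · exact leibniz_one_one hI tp hE a y
  · exact leibniz_two_one hI tp hE a y

lemma hatH_θ_mul {Θ : ChainMap T T} (hΘ : tp.IsSignedSwap Θ) (i j n : ℤ) (h : i + j = n)
    (a : ZC₂) (y : I.X j) :
    hatH hI tp hE i j n h (e i (θel 2 * a)) y = Θ.f n (hatH hI tp hE i j n h (e i a) y) := by
  by_cases hsupp : ¬(i = 0 ∧ j = 0) ∧ ¬(i = 0 ∧ j = 1) ∧ ¬(i = 1 ∧ j = 1)
  · rw [hatH_eq_zero _ _ _ _ hsupp, hatH_eq_zero _ _ _ _ hsupp, map_zero]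
  obtain ⟨rfl, rfl⟩ | ⟨rfl, rfl⟩ | ⟨rfl, rfl⟩ :
      i = 0 ∧ j = 0 ∨ i = 0 ∧ j = 1 ∨ i = 1 ∧ j = 1 := by
    tauto
  · obtain rfl : n = 0 := by omega
    rw [hatH_e_zero_zero, hatH_e_zero_zero, ZC₂.lift_θ_mul, ZC₂.map_lift, swap_diag hΘ]
  · obtain rfl : n = 1 := by omega
    rw [hatH_e_zero_one, hatH_e_zero_one, ZC₂.lift_θ_mul, ZC₂.map_lift, hI.map_lift₁,
      hI.map_lift₁, swap_lowerPath hΘ, swap_upperPath hΘ]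
  · obtain rfl : n = 2 := by omega
    rw [hatH_e_one_one, hatH_e_one_one, ZC₂.lift_θ_mul, ZC₂.map_lift, hI.map_lift₁,
      hI.map_lift₁, map_neg, swap_square hΘ, neg_neg]

variable {TEI : Cx} (bt : IsTensor E I TEI)

noncomputable def hatChainMap : ChainMap TEI T :=
  bt.liftChainMap (hatH hI tp hE) (hatH_add_left hI tp hE) (hatH_add_right hI tp hE)
    (hatH_leibniz hI tp hE)

@[simp]
lemma hatChainMap_ι (i j n : ℤ) (h : i + j = n) (x : E.X i) (y : I.X j) :
    (hatChainMap hI tp hE bt).f n (bt.ι i j n h x y) = hatH hI tp hE i j n h x y :=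
  bt.liftChainMap_ι _ _ _ _ i j n h x y

lemma hatChainMap_comm {Θ : ChainMap T T} (hΘ : tp.IsSignedSwap Θ) {Θ' : ChainMap TEI TEI}
    (hΘ' : ∀ i j n (h : i + j = n) a y,
      Θ'.f n (bt.ι i j n h (e i a) y) = bt.ι i j n h (e i (θel 2 * a)) y)
    (n : ℤ) (z : TEI.X n) :
    (hatChainMap hI tp hE bt).f n (Θ'.f n z) = Θ.f n ((hatChainMap hI tp hE bt).f n z) := by
  have key : (fun n => ((hatChainMap hI tp hE bt).f n).comp (Θ'.f n)) =
      fun n => (Θ.f n).comp ((hatChainMap hI tp hE bt).f n) := by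
    refine bt.hom_ext fun i j n h x y => ?_
    rcases lt_or_ge i 0 with hi | hi
    · obtain rfl := hE.neg i hi x
      simp [bt.ι_zero_left]
    · obtain ⟨a, rfl⟩ := (hE.bij i hi).2 x
      simp [hΘ', hatH_θ_mul hI tp hE hΘ]
  exact DFunLike.congr_fun (congrFun key n) z

end Map

end Hhat

theorem p2_Hhat_chain_map_and_equivariant
    -- the interval complex `I`:
    (I : Cx) (s₀ s₁ : I.X 0) (s : I.X 1) (hI : IsInterval I s₀ s₁ s)
    -- the standard complex `Eℤ_2`:
    (E : Cx) (e : ∀ n : ℤ, MonoidAlgebra ℤ (Multiplicative (ZMod 2)) →+ E.X n)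
    (hE : IsStdRes 2 E e)
    -- `TEI` realizes `Eℤ_2 ⊗ I` and `T` realizes `I ⊗ I`:
    (TEI : Cx) (bt : IsTensor E I TEI)
    (T : Cx) (tp : IsTensorPow I 2 T)
    -- `Θ` is the signed transposition `θ·(x ⊗ y) = (−1)^{|x||y|} y ⊗ x` on `I ⊗ I`:
    (Θ : ChainMap T T)
    (hΘ : ∀ k n (h : (∑ i, k i) = n) (v : ∀ i, I.X (k i)),
      Θ.f n (tp.ι k n h v) =
        sgn (k 0 * k 1) •
          tp.ι (fun i => k (Equiv.swap 0 1 i)) n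
            ((Equiv.sum_comp (Equiv.swap 0 1) k).trans h)
            (fun i => v (Equiv.swap 0 1 i)))
    -- `Θ'` is the action of `θ` on `Eℤ_2 ⊗ I` through the `Eℤ_2` factor:
    (Θ' : ChainMap TEI TEI)
    (hΘ' : ∀ i j n (h : i + j = n) a y,
      Θ'.f n (bt.ι i j n h (e i a) y) = bt.ι i j n h (e i (θel 2 * a)) y) :
    -- the `ℤ`-linear map `Ĥ : Eℤ_2 ⊗ I → I ⊗ I` with the values listed below is a
    -- chain map and is equivariant for the `ℤ/2`-actions:
    ∃ H : ChainMap TEI T,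
      -- `Ĥ(a ⊗ s_j) = s_j ⊗ s_j` for `a ∈ {1, θ} ⊆ (Eℤ_2)_0` and `j = 0, 1`:
      (∀ a, a = 1 ∨ a = θel 2 →
        (H.f 0 (bt.ι 0 0 0 rfl (e 0 a) s₀) =
          tp.ι (wdeg ![false, false]) 0 (by decide)
            (wfam I s ![s₀, s₀] ![false, false])) ∧
        (H.f 0 (bt.ι 0 0 0 rfl (e 0 a) s₁) =
          tp.ι (wdeg ![false, false]) 0 (by decide)
            (wfam I s ![s₁, s₁] ![false, false]))) ∧
      -- `Ĥ(a ⊗ s_j) = 0` for `a ∈ {1, θ} ⊆ (Eℤ_2)_k`, `k ≥ 1`, `j = 0, 1`: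
      (∀ k : ℤ, 1 ≤ k → ∀ a, a = 1 ∨ a = θel 2 →
        (H.f k (bt.ι k 0 k (add_zero k) (e k a) s₀) = 0) ∧
        (H.f k (bt.ι k 0 k (add_zero k) (e k a) s₁) = 0)) ∧
      -- `Ĥ(1 ⊗ s) = s₁ ⊗ s + s ⊗ s₀` for `1 ∈ (Eℤ_2)_0`:
      (H.f 1 (bt.ι 0 1 1 rfl (e 0 1) s) =
        tp.ι (wdeg ![false, true]) 1 (by decide)
          (wfam I s ![s₁, s₀] ![false, true]) +
        tp.ι (wdeg ![true, false]) 1 (by decide)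
          (wfam I s ![s₀, s₀] ![true, false])) ∧
      -- `Ĥ(θ ⊗ s) = s ⊗ s₁ + s₀ ⊗ s` for `θ ∈ (Eℤ_2)_0`:
      (H.f 1 (bt.ι 0 1 1 rfl (e 0 (θel 2)) s) =
        tp.ι (wdeg ![true, false]) 1 (by decide)
          (wfam I s ![s₀, s₁] ![true, false]) +
        tp.ι (wdeg ![false, true]) 1 (by decide)
          (wfam I s ![s₀, s₀] ![false, true])) ∧
      -- `Ĥ(1 ⊗ s) = s ⊗ s` for `1 ∈ (Eℤ_2)_1`:
      (H.f 2 (bt.ι 1 1 2 rfl (e 1 1) s) =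
        tp.ι (wdeg ![true, true]) 2 (by decide)
          (wfam I s ![s₀, s₀] ![true, true])) ∧
      -- `Ĥ(θ ⊗ s) = −s ⊗ s` for `θ ∈ (Eℤ_2)_1`:
      (H.f 2 (bt.ι 1 1 2 rfl (e 1 (θel 2)) s) =
        - tp.ι (wdeg ![true, true]) 2 (by decide)
            (wfam I s ![s₀, s₀] ![true, true])) ∧
      -- `Ĥ(a ⊗ s) = 0` for `a ∈ {1, θ} ⊆ (Eℤ_2)_k`, `k ≥ 2`:
      (∀ k : ℤ, 2 ≤ k → ∀ a, a = 1 ∨ a = θel 2 →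
        H.f (k + 1) (bt.ι k 1 (k + 1) rfl (e k a) s) = 0) ∧
      -- equivariance for the `ℤ/2`-actions:
      (∀ n (x : TEI.X n), H.f n (Θ'.f n x) = Θ.f n (H.f n x)) := by
  open Hhat in
  refine ⟨hatChainMap hI tp hE bt, fun a ha => ?_, fun k hk a ha => ?_, ?_, ?_, ?_, ?_,
    fun k hk a ha => ?_, hatChainMap_comm hI tp hE bt (tp.isSignedSwap_of_ι hΘ) hΘ'⟩
  -- `wfam` reduces definitionally to the listed entries, which the `rfl`s below rely on
  all_goals simp only [hatChainMap_ι, tp.ι_eq_tmul]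
  · rw [hatH_e_zero_zero, hatH_e_zero_zero, ZC₂.lift_self_of_eq_one_or_eq_θ _ ha,
      ZC₂.lift_self_of_eq_one_or_eq_θ _ ha]
    exact ⟨hI.lift₀_s₀ _ _, hI.lift₀_s₁ _ _⟩
  · exact ⟨hatH_eq_zero _ _ _ _ (by omega) _ _, hatH_eq_zero _ _ _ _ (by omega) _ _⟩
  · rw [hatH_e_zero_one, ZC₂.lift_one, hI.lift₁_s]
    rfl
  · rw [hatH_e_zero_one, ZC₂.lift_θ, hI.lift₁_s]
    rfl
  · rw [hatH_e_one_one, ZC₂.lift_one, hI.lift₁_s]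
    rfl
  · rw [hatH_e_one_one, ZC₂.lift_θ, hI.lift₁_s]
    rfl
  · exact hatH_eq_zero _ _ _ _ (by omega) _ _
end
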